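/- There exists a constant C > 0 such that for every g ∈ L²(0,1), the function x ↦ (1/(1−x²))∫_x^1 g(t) dt belongs to L²(0,1) and ‖(1/(1−x²))∫_x^1 g(t) dt‖_{L²(0,1)} ≤ C‖g‖_{L²(0,1)}. -/

import Mathlib

/-!
On `(0, 1)` we have `1 - x² ≥ 1 - x`, so it suffices to prove the (reflected) Hardy inequality
`∫₀¹ ((1 - x)⁻¹ ∫ₓ¹ |g|)² dx ≤ 4 ∫₀¹ |g|²`, which gives `C = 2`. Cauchy–Schwarz with the weight
`(1 - t)^(1/2)` gives `(∫ₓ¹ |g|)² ≤ 2 (1 - x)^(1/2) ∫ₓ¹ |g(t)|² (1 - t)^(1/2) dt`. Multiplying by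
`(1 - x)⁻²` and exchanging the order of integration leaves the inner integral
`∫₀ᵗ 2 (1 - x)^(-3/2) dx ≤ 4 (1 - t)^(-1/2)`, which cancels the weight.
-/

open MeasureTheory Set Function

open scoped ENNReal

theorem ENNReal.sq_lintegral_mul_le {α : Type*} [MeasurableSpace α] {μ : Measure α}
    {f g : α → ℝ≥0∞} (hf : AEMeasurable f μ) (hg : AEMeasurable g μ) :
    (∫⁻ a, f a * g a ∂μ) ^ 2 ≤ (∫⁻ a, f a ^ 2 ∂μ) * ∫⁻ a, g a ^ 2 ∂μ := by
  have half : ((2 : ℕ) : ℝ)⁻¹ + ((2 : ℕ) : ℝ)⁻¹ = 1 := by norm_num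
  have h := ENNReal.lintegral_mul_norm_pow_le (hf.pow_const 2) (hg.pow_const 2)
    (by positivity) (by positivity) half
  simp only [ENNReal.pow_rpow_inv_natCast two_ne_zero] at h
  calc (∫⁻ a, f a * g a ∂μ) ^ 2
      ≤ ((∫⁻ a, f a ^ 2 ∂μ) ^ ((2 : ℕ) : ℝ)⁻¹ * (∫⁻ a, g a ^ 2 ∂μ) ^ ((2 : ℕ) : ℝ)⁻¹) ^ 2 :=
        pow_le_pow_left₀ bot_le h 2
    _ = (∫⁻ a, f a ^ 2 ∂μ) * ∫⁻ a, g a ^ 2 ∂μ := by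
        rw [mul_pow, ENNReal.rpow_inv_natCast_pow two_ne_zero,
          ENNReal.rpow_inv_natCast_pow two_ne_zero]

theorem sq_eLpNorm_two {α ε : Type*} [MeasurableSpace α] {μ : Measure α} [ENorm ε]
    (f : α → ε) : eLpNorm f 2 μ ^ 2 = ∫⁻ a, ‖f a‖ₑ ^ 2 ∂μ := by
  simpa [ENNReal.rpow_two] using eLpNorm_nnreal_pow_eq_lintegral (f := f) (μ := μ) (p := 2)
    two_ne_zero

theorem eLpNorm_two_le_mul_of_lintegral_sq_le {α ε ε' : Type*} [MeasurableSpace α]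
    {μ : Measure α} [ENorm ε] [ENorm ε'] {f : α → ε} {g : α → ε'} {c : ℝ≥0∞}
    (h : ∫⁻ a, ‖f a‖ₑ ^ 2 ∂μ ≤ c ^ 2 * ∫⁻ a, ‖g a‖ₑ ^ 2 ∂μ) :
    eLpNorm f 2 μ ≤ c * eLpNorm g 2 μ := by
  rwa [← ENNReal.pow_le_pow_left_iff two_ne_zero, mul_pow, sq_eLpNorm_two,
    sq_eLpNorm_two]

theorem lintegral_Ioo_ofReal_eq_intervalIntegral {f : ℝ → ℝ} {x y : ℝ} (hxy : x ≤ y)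
    (hf : IntervalIntegrable f volume x y) (hf_nonneg : ∀ t ∈ Ioo x y, 0 ≤ f t) :
    ∫⁻ t in Ioo x y, ENNReal.ofReal (f t) = ENNReal.ofReal (∫ t in x..y, f t) := by
  rw [intervalIntegral.integral_of_le hxy, integral_Ioc_eq_integral_Ioo,
    ofReal_integral_eq_lintegral_ofReal ((hf.1).mono_set Ioo_subset_Ioc_self)
      ((ae_restrict_iff' measurableSet_Ioo).mpr (ae_of_all _ hf_nonneg))]

theorem lintegral_Ioo_ofReal_sub_rpow {b x y r : ℝ} (hxy : x ≤ y) (hyb : y ≤ b)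
    (hr : -1 < r ∨ r ≠ -1 ∧ y < b) :
    ∫⁻ t in Ioo x y, ENNReal.ofReal ((b - t) ^ r)
      = ENNReal.ofReal (((b - x) ^ (r + 1) - (b - y) ^ (r + 1)) / (r + 1)) := by
  have hr' : -1 < r ∨ r ≠ -1 ∧ (0 : ℝ) ∉ uIcc (b - y) (b - x) := by
    refine hr.imp_right fun ⟨hr, hy⟩ => ⟨hr, fun h => ?_⟩
    rw [uIcc_of_le (by linarith)] at h
    linarith [h.1]
  have hint : IntervalIntegrable (fun s : ℝ => s ^ r) volume (b - y) (b - x) := by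
    rcases hr' with hr | ⟨-, h0⟩
    · exact intervalIntegral.intervalIntegrable_rpow' hr
    · exact intervalIntegral.intervalIntegrable_rpow (Or.inr h0)
  rw [lintegral_Ioo_ofReal_eq_intervalIntegral hxy
      (by simpa using hint.symm.comp_sub_left b)
      fun t ht => Real.rpow_nonneg (by linarith [ht.2]) r,
    intervalIntegral.integral_comp_sub_left (fun s : ℝ => s ^ r) b, integral_rpow hr']

theorem lintegral_Ioo_lintegral_Ioo_swap {a b : ℝ} {f : ℝ → ℝ → ℝ≥0∞}
    (hf : Measurable (uncurry f)) :
    ∫⁻ x in Ioo a b, ∫⁻ t in Ioo x b, f x t = ∫⁻ t in Ioo a b, ∫⁻ x in Ioo a t, f x t := by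
  set φ : ℝ × ℝ → ℝ≥0∞ := {p | p.1 < p.2}.indicator (uncurry f)
  have hφ : Measurable φ := hf.indicator (measurableSet_lt measurable_fst measurable_snd)
  have inner_left : ∀ x ∈ Ioo a b, ∫⁻ t in Ioo x b, f x t = ∫⁻ t in Ioo a b, φ (x, t) := by
    intro x hx
    have : (fun t => φ (x, t)) = (Ioi x).indicator (f x) := by
      ext t; simp [φ, indicator]
    rw [this, lintegral_indicator measurableSet_Ioi, Measure.restrict_restrict measurableSet_Ioi,
      Ioi_inter_Ioo, max_eq_left hx.1.le]
  have inner_right : ∀ t ∈ Ioo a b, ∫⁻ x in Ioo a t, f x t = ∫⁻ x in Ioo a b, φ (x, t) := by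
    intro t ht
    have : (fun x => φ (x, t)) = (Iio t).indicator (fun x => f x t) := by
      ext x; simp [φ, indicator]
    rw [this, lintegral_indicator measurableSet_Iio, Measure.restrict_restrict measurableSet_Iio,
      Iio_inter_Ioo, min_eq_left ht.2.le]
  rw [setLIntegral_congr_fun measurableSet_Ioo inner_left,
    setLIntegral_congr_fun measurableSet_Ioo inner_right]
  exact lintegral_lintegral_swap hφ.aemeasurable

theorem sq_lintegral_Ioo_le {F : ℝ → ℝ≥0∞} (hF : Measurable F) {x b : ℝ} (hxb : x ≤ b) :
    (∫⁻ t in Ioo x b, F t) ^ 2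
      ≤ 2 * ENNReal.ofReal ((b - x) ^ (1 / 2 : ℝ))
        * ∫⁻ t in Ioo x b, F t ^ 2 * ENNReal.ofReal ((b - t) ^ (1 / 2 : ℝ)) := by
  set u : ℝ → ℝ≥0∞ := fun t => F t * ENNReal.ofReal ((b - t) ^ (1 / 4 : ℝ))
  set v : ℝ → ℝ≥0∞ := fun t => ENNReal.ofReal ((b - t) ^ (-(1 / 4) : ℝ))
  have hF_eq : ∀ t ∈ Ioo x b, F t = u t * v t := fun t ht => by
    have hbt : 0 < b - t := by linarith [ht.2]
    rw [mul_assoc, ← ENNReal.ofReal_mul (by positivity), ← Real.rpow_add hbt]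
    norm_num
  have hu : ∀ t ∈ Ioo x b, u t ^ 2 = F t ^ 2 * ENNReal.ofReal ((b - t) ^ (1 / 2 : ℝ)) :=
    fun t ht => by
      have hbt : 0 ≤ b - t := by linarith [ht.2]
      rw [mul_pow, ← ENNReal.ofReal_pow (by positivity), ← Real.rpow_mul_natCast hbt]
      norm_num
  have hv : ∀ t ∈ Ioo x b, v t ^ 2 = ENNReal.ofReal ((b - t) ^ (-(1 / 2) : ℝ)) :=
    fun t ht => by
      have hbt : 0 ≤ b - t := by linarith [ht.2]
      rw [← ENNReal.ofReal_pow (by positivity), ← Real.rpow_mul_natCast hbt]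
      norm_num
  have hu_meas : Measurable u := by fun_prop
  have hv_meas : Measurable v := by fun_prop
  calc (∫⁻ t in Ioo x b, F t) ^ 2 = (∫⁻ t in Ioo x b, u t * v t) ^ 2 := by
        rw [setLIntegral_congr_fun measurableSet_Ioo hF_eq]
    _ ≤ (∫⁻ t in Ioo x b, u t ^ 2) * ∫⁻ t in Ioo x b, v t ^ 2 :=
        ENNReal.sq_lintegral_mul_le hu_meas.aemeasurable hv_meas.aemeasurable
    _ = _ := by
        rw [setLIntegral_congr_fun measurableSet_Ioo hu,
          setLIntegral_congr_fun measurableSet_Ioo hv,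
          lintegral_Ioo_ofReal_sub_rpow hxb le_rfl (Or.inl (by norm_num)), mul_comm]
        norm_num
        rw [show (b - x) ^ (1 / 2 : ℝ) / (1 / 2) = 2 * (b - x) ^ (1 / 2 : ℝ) by ring,
          ENNReal.ofReal_mul zero_le_two, ENNReal.ofReal_ofNat]

theorem hardy_inequality_Ioo_of_measurable {a b : ℝ} {F : ℝ → ℝ≥0∞} (hF : Measurable F) :
    ∫⁻ x in Ioo a b, (ENNReal.ofReal (b - x)⁻¹ * ∫⁻ t in Ioo x b, F t) ^ 2
      ≤ 4 * ∫⁻ t in Ioo a b, F t ^ 2 := by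
  set w : ℝ → ℝ≥0∞ := fun x => 2 * ENNReal.ofReal ((b - x) ^ (-(3 / 2) : ℝ))
  set G : ℝ → ℝ≥0∞ := fun t => F t ^ 2 * ENNReal.ofReal ((b - t) ^ (1 / 2 : ℝ))
  have hw : Measurable w := by fun_prop
  have cauchy_schwarz : ∀ x ∈ Ioo a b,
      (ENNReal.ofReal (b - x)⁻¹ * ∫⁻ t in Ioo x b, F t) ^ 2 ≤ ∫⁻ t in Ioo x b, w x * G t := by
    intro x hx
    have hbx : 0 < b - x := by linarith [hx.2]
    have weight : ENNReal.ofReal (b - x)⁻¹ ^ 2 * (2 * ENNReal.ofReal ((b - x) ^ (1 / 2 : ℝ)))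
        = 2 * ENNReal.ofReal ((b - x) ^ (-(3 / 2) : ℝ)) := by
      rw [mul_left_comm, ← ENNReal.ofReal_pow (by positivity), ← ENNReal.ofReal_mul (by positivity),
        ← Real.rpow_natCast, Real.inv_rpow hbx.le, ← Real.rpow_neg hbx.le, ← Real.rpow_add hbx]
      norm_num
    rw [lintegral_const_mul' _ _ (ENNReal.mul_ne_top ENNReal.ofNat_ne_top ENNReal.ofReal_ne_top),
      mul_pow, ← weight, mul_assoc]
    gcongr
    exact sq_lintegral_Ioo_le hF hx.2.le
  have weight_integral : ∀ t ∈ Ioo a b, (∫⁻ x in Ioo a t, w x) * G t ≤ 4 * F t ^ 2 := by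
    intro t ht
    have hbt : 0 < b - t := by linarith [ht.2]
    have hw_int : ∫⁻ x in Ioo a t, w x ≤ 4 * ENNReal.ofReal ((b - t) ^ (-(1 / 2) : ℝ)) := by
      rw [lintegral_const_mul _ (by fun_prop),
        lintegral_Ioo_ofReal_sub_rpow ht.1.le ht.2.le (Or.inr ⟨by norm_num, ht.2⟩)]
      have hba : 0 ≤ (b - a) ^ (-(1 / 2) : ℝ) := Real.rpow_nonneg (by linarith [ht.1, ht.2]) _
      calc 2 * ENNReal.ofReal (((b - a) ^ (-(3 / 2) + 1 : ℝ) - (b - t) ^ (-(3 / 2) + 1 : ℝ))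
            / (-(3 / 2) + 1))
          ≤ 2 * ENNReal.ofReal (2 * (b - t) ^ (-(1 / 2) : ℝ)) := by
            gcongr
            norm_num
            linarith
        _ = 4 * ENNReal.ofReal ((b - t) ^ (-(1 / 2) : ℝ)) := by
            rw [ENNReal.ofReal_mul zero_le_two, ENNReal.ofReal_ofNat, ← mul_assoc]
            norm_num
    calc (∫⁻ x in Ioo a t, w x) * G t
        ≤ 4 * ENNReal.ofReal ((b - t) ^ (-(1 / 2) : ℝ)) * G t := by gcongr
      _ = 4 * F t ^ 2 := by
        rw [mul_left_comm, mul_assoc, ← ENNReal.ofReal_mul (by positivity), ← Real.rpow_add hbt]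
        norm_num
        ring
  calc ∫⁻ x in Ioo a b, (ENNReal.ofReal (b - x)⁻¹ * ∫⁻ t in Ioo x b, F t) ^ 2
      ≤ ∫⁻ x in Ioo a b, ∫⁻ t in Ioo x b, w x * G t :=
        setLIntegral_mono' measurableSet_Ioo cauchy_schwarz
    _ = ∫⁻ t in Ioo a b, ∫⁻ x in Ioo a t, w x * G t :=
        lintegral_Ioo_lintegral_Ioo_swap (by fun_prop)
    _ = ∫⁻ t in Ioo a b, (∫⁻ x in Ioo a t, w x) * G t := by
        simp_rw [lintegral_mul_const _ hw]
    _ ≤ ∫⁻ t in Ioo a b, 4 * F t ^ 2 := setLIntegral_mono' measurableSet_Ioo weight_integral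
    _ = 4 * ∫⁻ t in Ioo a b, F t ^ 2 := lintegral_const_mul _ (by fun_prop)

theorem hardy_inequality_Ioo {a b : ℝ} {F : ℝ → ℝ≥0∞}
    (hF : AEMeasurable F (volume.restrict (Ioo a b))) :
    ∫⁻ x in Ioo a b, (ENNReal.ofReal (b - x)⁻¹ * ∫⁻ t in Ioo x b, F t) ^ 2
      ≤ 4 * ∫⁻ t in Ioo a b, F t ^ 2 := by
  have inner_eq : ∀ x ∈ Ioo a b,
      (ENNReal.ofReal (b - x)⁻¹ * ∫⁻ t in Ioo x b, F t) ^ 2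
        = (ENNReal.ofReal (b - x)⁻¹ * ∫⁻ t in Ioo x b, hF.mk F t) ^ 2 := fun x hx => by
    rw [lintegral_congr_ae
      (ae_restrict_of_ae_restrict_of_subset (Ioo_subset_Ioo_left hx.1.le) hF.ae_eq_mk)]
  have outer_eq : ∫⁻ t in Ioo a b, F t ^ 2 = ∫⁻ t in Ioo a b, hF.mk F t ^ 2 :=
    lintegral_congr_ae (hF.ae_eq_mk.mono fun t ht => congrArg (· ^ 2) ht)
  rw [setLIntegral_congr_fun measurableSet_Ioo inner_eq, outer_eq]
  exact hardy_inequality_Ioo_of_measurable hF.measurable_mk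

theorem enorm_inv_one_sub_sq_mul_integral_le {g : ℝ → ℂ} {x : ℝ} (hx : x ∈ Ico 0 1) :
    ‖(((1 - x ^ 2)⁻¹ : ℝ) : ℂ) * ∫ t in x..1, g t‖ₑ
      ≤ ENNReal.ofReal (1 - x)⁻¹ * ∫⁻ t in Ioo x 1, ‖g t‖ₑ := by
  obtain ⟨hx0, hx1⟩ := hx
  rw [enorm_mul]
  gcongr
  · rw [← ofReal_norm, Complex.norm_real, Real.norm_of_nonneg (inv_nonneg.mpr (by nlinarith))]
    exact ENNReal.ofReal_le_ofReal (inv_anti₀ (by linarith) (by nlinarith))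
  · rw [intervalIntegral.integral_of_le hx1.le, ← Measure.restrict_congr_set Ioo_ae_eq_Ioc]
    exact enorm_integral_le_lintegral_enorm _

theorem continuousOn_inv_one_sub_sq_mul_integral {g : ℝ → ℂ}
    (hg : IntegrableOn g (Ioo 0 1)) :
    ContinuousOn (fun x => (((1 - x ^ 2)⁻¹ : ℝ) : ℂ) * ∫ t in x..1, g t) (Ioo 0 1) := by
  have hg_int : IntegrableOn g (uIcc 0 1) := by
    rwa [uIcc_of_le zero_le_one, integrableOn_Icc_iff_integrableOn_Ioo]
  refine ContinuousOn.mul ?_ ?_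
  · exact Complex.continuous_ofReal.comp_continuousOn
      (ContinuousOn.inv₀ (by fun_prop) fun x hx => by nlinarith [hx.1, hx.2])
  · exact (intervalIntegral.continuousOn_primitive_interval_left hg_int).mono
      (uIcc_of_le (zero_le_one' ℝ) ▸ Ioo_subset_Icc_self)

theorem eLpNorm_inv_one_sub_sq_mul_integral_le {g : ℝ → ℂ}
    (hg : AEStronglyMeasurable g (volume.restrict (Ioo 0 1))) :
    eLpNorm (fun x => (((1 - x ^ 2)⁻¹ : ℝ) : ℂ) * ∫ t in x..1, g t) 2
        (volume.restrict (Ioo 0 1))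
      ≤ ENNReal.ofReal 2 * eLpNorm g 2 (volume.restrict (Ioo 0 1)) := by
  refine eLpNorm_two_le_mul_of_lintegral_sq_le ?_
  calc ∫⁻ x in Ioo 0 1, ‖(((1 - x ^ 2)⁻¹ : ℝ) : ℂ) * ∫ t in x..1, g t‖ₑ ^ 2
      ≤ ∫⁻ x in Ioo 0 1, (ENNReal.ofReal (1 - x)⁻¹ * ∫⁻ t in Ioo x 1, ‖g t‖ₑ) ^ 2 :=
        setLIntegral_mono' measurableSet_Ioo fun x hx => by
          gcongr
          exact enorm_inv_one_sub_sq_mul_integral_le (Ioo_subset_Ico_self hx)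
    _ ≤ 4 * ∫⁻ t in Ioo 0 1, ‖g t‖ₑ ^ 2 := hardy_inequality_Ioo hg.enorm
    _ = ENNReal.ofReal 2 ^ 2 * ∫⁻ t in Ioo 0 1, ‖g t‖ₑ ^ 2 := by norm_num

theorem CE_application_one : ∃ C : ℝ, 0 < C ∧
    ∀ g : ℝ → ℂ, MemLp g 2 (volume.restrict (Ioo (0:ℝ) 1)) →
      MemLp (fun x => (((1 - x^2)⁻¹ : ℝ) : ℂ) * ∫ t in x..(1:ℝ), g t) 2
        (volume.restrict (Ioo (0:ℝ) 1)) ∧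
      eLpNorm (fun x => (((1 - x^2)⁻¹ : ℝ) : ℂ) * ∫ t in x..(1:ℝ), g t) 2
          (volume.restrict (Ioo (0:ℝ) 1))
        ≤ ENNReal.ofReal C * eLpNorm g 2 (volume.restrict (Ioo (0:ℝ) 1)) := by
  refine ⟨2, two_pos, fun g hg => ?_⟩
  have bound := eLpNorm_inv_one_sub_sq_mul_integral_le hg.1
  have continuous := continuousOn_inv_one_sub_sq_mul_integral (hg.integrable one_le_two)
  exact ⟨⟨continuous.aestronglyMeasurable measurableSet_Ioo,
    bound.trans_lt (ENNReal.mul_lt_top ENNReal.ofReal_lt_top hg.2)⟩, bound⟩
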